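/- Let V be a nonzero finite-dimensional real inner product space of dimension n ≥ 1, and let f : V → V be a self-adjoint linear endomorphism that has at least one positive eigenvalue. Write the characteristic polynomial of f as Σ_{k=0}^n a_k u^k (so a_n = ±1 depending on sign convention; it is monic up to sign). Then sup{t ∈ ℝ : id − t·f is positive semidefinite} ≥ (1 + max_{0 ≤ k < n} |a_k / a_n|)^{−1}. (This is the linear-algebraic core of Corollary 3 of the paper, which lower-bounds the nef threshold σ(L,M) by (1 + max_{0≤k<n} (n choose k) L^k M^{n−k} / L^n)^{−1} using Cauchy's root bound applied to χ(uL−M).) -/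

import Mathlib

open RealInnerProductSpace Polynomial Finset

/-!
Every eigenvalue of `f` is a root of its characteristic polynomial, so by Cauchy's root bound it
is smaller than `B = 1 + max_{k < n} |a_k / a_n|`. Diagonalising `f` in an orthonormal eigenbasis
then shows `⟪f v, v⟫ ≤ B ‖v‖²`, i.e. `id - B⁻¹ • f` is positive semidefinite. The set of such `t`
is bounded above by `μ⁻¹` for any positive eigenvalue `μ`, so its supremum is at least `B⁻¹`.
-/

def IsPosSemidefEnd {V : Type*} [NormedAddCommGroup V] [InnerProductSpace ℝ V]
    (g : V →ₗ[ℝ] V) : Prop :=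
  (∀ v w : V, ⟪g v, w⟫ = ⟪v, g w⟫) ∧ ∀ v : V, 0 ≤ ⟪g v, v⟫

theorem Polynomial.IsRoot.norm_lt_one_add_sup'_norm_coeff_div {K : Type*} [NormedField K]
    {p : K[X]} {n : ℕ} (hp : p.natDegree = n) (h : (range n).Nonempty) {a : K}
    (ha : p.IsRoot a) : ‖a‖ < 1 + (range n).sup' h fun k => ‖p.coeff k / p.coeff n‖ := by
  subst hp
  have hp0 : p ≠ 0 := by
    rintro rfl
    simp at h
  obtain ⟨k, hk, hmax⟩ := exists_mem_eq_sup _ h fun k => ‖p.coeff k‖₊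
  calc ‖a‖ < cauchyBound p := NNReal.coe_lt_coe.mpr (ha.norm_lt_cauchyBound hp0)
    _ = 1 + ‖p.coeff k / p.coeff p.natDegree‖ := by
      rw [cauchyBound, hmax, add_comm]
      simp [coeff_natDegree]
    _ ≤ _ := by grw [← le_sup' (fun k => ‖p.coeff k / p.coeff p.natDegree‖) hk]

theorem LinearMap.IsSymmetric.inner_map_self_le_mul_norm_sq {E : Type*} [NormedAddCommGroup E]
    [InnerProductSpace ℝ E] [FiniteDimensional ℝ E] {T : E →ₗ[ℝ] E} (hT : T.IsSymmetric)
    {c : ℝ} (hc : ∀ μ, Module.End.HasEigenvalue T μ → μ ≤ c) (v : E) :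
    ⟪T v, v⟫ ≤ c * ‖v‖ ^ 2 := by
  set e := hT.eigenvectorBasis rfl
  have hexpand : ⟪T v, v⟫ = ∑ i, hT.eigenvalues rfl i * ⟪e i, v⟫ ^ 2 := by
    rw [← e.sum_inner_mul_inner]
    refine sum_congr rfl fun i _ => ?_
    rw [hT, hT.apply_eigenvectorBasis, real_inner_smul_right, real_inner_comm,
      RCLike.ofReal_real_eq_id, id_eq]
    ring
  rw [hexpand, ← e.sum_sq_inner_right, mul_sum]
  gcongr with i
  exact hc _ (hT.hasEigenvalue_eigenvalues rfl i)

section IsPosSemidefEnd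

variable {V : Type*} [NormedAddCommGroup V] [InnerProductSpace ℝ V] {f : V →ₗ[ℝ] V} {t : ℝ}

theorem isPosSemidefEnd_id_sub_inv_smul [FiniteDimensional ℝ V] (hf : f.IsSymmetric) {c : ℝ}
    (hc : 0 < c) (hle : ∀ μ, Module.End.HasEigenvalue f μ → μ ≤ c) :
    IsPosSemidefEnd (LinearMap.id - c⁻¹ • f) := by
  refine ⟨LinearMap.IsSymmetric.id.sub (hf.smul (conj_trivial _)), fun v => ?_⟩
  rw [LinearMap.sub_apply, LinearMap.smul_apply, inner_sub_left, real_inner_smul_left,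
    LinearMap.id_apply, real_inner_self_eq_norm_sq, sub_nonneg, inv_mul_le_iff₀ hc]
  exact hf.inner_map_self_le_mul_norm_sq hle v

theorem le_inv_of_isPosSemidefEnd_id_sub_smul {μ : ℝ} (hμ : Module.End.HasEigenvalue f μ)
    (hμ0 : 0 < μ) (ht : IsPosSemidefEnd (LinearMap.id - t • f)) : t ≤ μ⁻¹ := by
  obtain ⟨w, hw⟩ := hμ.exists_hasEigenvector
  have hw0 : 0 < ‖w‖ ^ 2 := by have := norm_pos_iff.mpr hw.2; positivity
  have hnonneg := ht.2 w
  rw [LinearMap.sub_apply, LinearMap.smul_apply, hw.apply_eq_smul, smul_smul, inner_sub_left,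
    real_inner_smul_left, LinearMap.id_apply, real_inner_self_eq_norm_sq, ← one_sub_mul] at hnonneg
  rw [← one_div, le_div_iff₀ hμ0]
  nlinarith

end IsPosSemidefEnd

/-- Linear-algebraic core of Corollary 3: for a self-adjoint endomorphism `f` of an
`n`-dimensional real inner product space (`n ≥ 1`) having a positive eigenvalue, with
characteristic polynomial `Σ a_k u^k`, one has
`sup {t : id - t • f psd} ≥ (1 + max_{0 ≤ k < n} |a_k / a_n|)⁻¹`. -/
theorem stmt_4 {V : Type*} [NormedAddCommGroup V] [InnerProductSpace ℝ V]
    [FiniteDimensional ℝ V] (n : ℕ) (hn : 1 ≤ n) (hdim : Module.finrank ℝ V = n)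
    (f : V →ₗ[ℝ] V) (hf : ∀ v w : V, ⟪f v, w⟫ = ⟪v, f w⟫)
    (hpos : ∃ μ : ℝ, Module.End.HasEigenvalue f μ ∧ 0 < μ) :
    (1 + (Finset.range n).sup' (Finset.nonempty_range_iff.mpr (by omega))
        (fun k => |(LinearMap.charpoly f).coeff k / (LinearMap.charpoly f).coeff n|))⁻¹
      ≤ sSup {t : ℝ | IsPosSemidefEnd ((LinearMap.id : V →ₗ[ℝ] V) - t • f)} := by
  have hdeg : (LinearMap.charpoly f).natDegree = n := by rw [LinearMap.charpoly_natDegree, hdim]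
  have hne : (range n).Nonempty := nonempty_range_iff.mpr (by omega)
  set B := 1 + (range n).sup' hne
    fun k => |(LinearMap.charpoly f).coeff k / (LinearMap.charpoly f).coeff n|
  have heig_lt : ∀ μ, Module.End.HasEigenvalue f μ → μ < B := fun μ hμ =>
    (le_abs_self μ).trans_lt <| ((Module.End.hasEigenvalue_iff_isRoot_charpoly f μ).mp hμ)
      |>.norm_lt_one_add_sup'_norm_coeff_div hdeg hne
  obtain ⟨μ, hμ, hμ0⟩ := hpos
  refine le_csSup ⟨μ⁻¹, fun t ht => le_inv_of_isPosSemidefEnd_id_sub_smul hμ hμ0 ht⟩ ?_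
  exact isPosSemidefEnd_id_sub_inv_smul hf (hμ0.trans (heig_lt μ hμ)) fun ν hν => (heig_lt ν hν).le
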